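/- Chen–Chu–Gu finite quintuple form: for every nonnegative integer n, ∑_{k=0}^n (1 + z q^k) · [n choose k]_q · (z;q)_{n+1} / (z² q^k;q)_{n+1} · z^k q^{k²} = 1. -/

import Mathlib

/-- The q-shifted factorial `(x;q)_n`. -/
def qPoch {K : Type*} [Field K] (q x : K) (n : ℕ) : K :=
  ∏ j ∈ Finset.range n, (1 - x * q ^ j)

/-- The Gaussian binomial coefficient `[n choose k]_q`, zero for `k > n`. -/
def qBinom {K : Type*} [Field K] (q : K) (n k : ℕ) : K :=
  if k ≤ n then qPoch q q n / (qPoch q q k * qPoch q q (n - k)) else 0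

/-!
Induction on `n` by creative telescoping. Writing `T n k` for the summand, there is an explicit
companion `G n k` with `T (n+1) k - T n k = G n k - G n (k+1)` and `G n 0 = G n (n+2) = 0`, so the
sum does not change from `n` to `n + 1`, and for `n = 0` it is `(1 + z)(1 - z)/(1 - z²) = 1`.
Over the common denominator `(z²q^k;q)_{n+2}` the telescoping relation becomes a polynomial
identity, which follows from the q-Pascal rule and `(1 - q^(k+1)) [n, k+1] = (1 - q^(n-k)) [n, k]`.
-/

open Finset

section QPochhammer

variable {K : Type*} [Field K] {q x : K}

@[simp]
lemma qPoch_zero (q x : K) : qPoch q x 0 = 1 :=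
  prod_range_zero _

lemma qPoch_succ (q x : K) (n : ℕ) : qPoch q x (n + 1) = qPoch q x n * (1 - x * q ^ n) :=
  prod_range_succ _ _

lemma qPoch_succ' (q x : K) (n : ℕ) : qPoch q x (n + 1) = (1 - x) * qPoch q (x * q) n := by
  simp only [qPoch, prod_range_succ', pow_zero, mul_one, pow_succ, mul_assoc, mul_comm q]
  exact mul_comm _ _

lemma qPoch_ne_zero_iff {n : ℕ} : qPoch q x n ≠ 0 ↔ ∀ j < n, 1 - x * q ^ j ≠ 0 := by
  simp only [qPoch, prod_ne_zero_iff, mem_range]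

lemma qPoch_ne_zero_of_le {m n : ℕ} (h : qPoch q x n ≠ 0) (hmn : m ≤ n) : qPoch q x m ≠ 0 :=
  qPoch_ne_zero_iff.mpr fun j hj => qPoch_ne_zero_iff.mp h j (hj.trans_le hmn)

end QPochhammer

section QBinomial

variable {K : Type*} [Field K] {q : K}

lemma qBinom_of_add_eq {n k j : ℕ} (h : k + j = n) :
    qBinom q n k = qPoch q q n / (qPoch q q k * qPoch q q j) := by
  subst h
  rw [qBinom, if_pos (Nat.le_add_right k j), Nat.add_sub_cancel_left]

lemma qBinom_of_lt {n k : ℕ} (h : n < k) : qBinom q n k = 0 :=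
  if_neg (not_le.mpr h)

lemma qBinom_zero_right {n : ℕ} (hq : qPoch q q n ≠ 0) : qBinom q n 0 = 1 := by
  simp [qBinom, hq]

lemma qBinom_succ_mul_one_sub {n k : ℕ} (hq : qPoch q q n ≠ 0) (hk : k ≤ n) :
    qBinom q n (k + 1) * (1 - q ^ (k + 1)) = qBinom q n k * (1 - q ^ (n - k)) := by
  obtain ⟨j, rfl⟩ := Nat.exists_eq_add_of_le hk
  rcases j with _ | j
  · simp [qBinom_of_lt]
  have hk : qPoch q q k ≠ 0 := qPoch_ne_zero_of_le hq (by omega)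
  have hj : qPoch q q j ≠ 0 := qPoch_ne_zero_of_le hq (by omega)
  have hk1 : 1 - q * q ^ k ≠ 0 := qPoch_ne_zero_iff.mp hq k (by omega)
  have hj1 : 1 - q * q ^ j ≠ 0 := qPoch_ne_zero_iff.mp hq j (by omega)
  rw [Nat.add_sub_cancel_left, qBinom_of_add_eq (j := j + 1) rfl,
    qBinom_of_add_eq (j := j) (by omega), qPoch_succ q q k, qPoch_succ q q j]
  field_simp
  ring

lemma qBinom_succ_succ {n k : ℕ} (hq : qPoch q q (n + 1) ≠ 0) (hk : k ≤ n) :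
    qBinom q (n + 1) (k + 1) = qBinom q n (k + 1) + q ^ (n - k) * qBinom q n k := by
  obtain ⟨j, rfl⟩ := Nat.exists_eq_add_of_le hk
  rcases j with _ | j
  · simp [qBinom, hq, qPoch_ne_zero_of_le hq (Nat.le_succ k)]
  have hk : qPoch q q k ≠ 0 := qPoch_ne_zero_of_le hq (by omega)
  have hj : qPoch q q j ≠ 0 := qPoch_ne_zero_of_le hq (by omega)
  have hk1 : 1 - q * q ^ k ≠ 0 := qPoch_ne_zero_iff.mp hq k (by omega)
  have hj1 : 1 - q * q ^ j ≠ 0 := qPoch_ne_zero_iff.mp hq j (by omega)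
  rw [Nat.add_sub_cancel_left, qBinom_of_add_eq (j := j + 1) (by omega),
    qBinom_of_add_eq (j := j) (by omega), qBinom_of_add_eq (j := j + 1) rfl,
    show k + (j + 1) + 1 = k + j + 1 + 1 by omega, qPoch_succ q q (k + j + 1),
    qPoch_succ q q k, qPoch_succ q q j]
  field_simp
  ring_nf

end QBinomial

lemma ccg_core_identity {R : Type*} [CommRing R] (q z B₀ B₁ B₂ : R) (m s : ℕ)
    (hpascal : B₂ = B₁ + q ^ s * B₀) (hratio : B₁ * (1 - q ^ m) = B₀ * (1 - q ^ s)) :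
    (1 + z * q ^ m) * (B₂ * (1 - z * q ^ (m + s)) - B₁ * (1 - z ^ 2 * q ^ m * q ^ (m + s))) =
      q ^ s * B₀ * (1 - z ^ 2 * q ^ m * q ^ (m + s)) -
        q ^ (m + m + s) * B₁ * z * (1 - z ^ 2 * q ^ m) := by
  subst hpascal
  linear_combination (-(z * q ^ (m + s))) * hratio

section CCG

variable {K : Type*} [Field K] {q z : K}

def ccgTerm (q z : K) (n k : ℕ) : K :=
  (1 + z * q ^ k) * qBinom q n k * (qPoch q z (n + 1) / qPoch q (z ^ 2 * q ^ k) (n + 1)) *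
    z ^ k * q ^ (k ^ 2)

def ccgCompanion (q z : K) (n : ℕ) : ℕ → K
  | 0 => 0
  | k + 1 => q ^ (n + 1 + k * (k + 1)) * qBinom q n k * z ^ (k + 1) *
      (qPoch q z (n + 1) / qPoch q (z ^ 2 * q ^ (k + 1)) (n + 1))

lemma one_sub_sq_mul_pow_ne_zero (hz : ∀ j : ℕ, 1 - z ^ 2 * q ^ j ≠ 0) (i j : ℕ) :
    1 - z ^ 2 * q ^ i * q ^ j ≠ 0 := by
  simpa only [pow_add, mul_assoc] using hz (i + j)

/-- `B` stands for `[n, m - 1]_q`, read as `0` when `m = 0`, so that both cases share this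
computation. -/
lemma ccgTerm_succ_sub_ccgTerm_of_qBinom (hz : ∀ j : ℕ, 1 - z ^ 2 * q ^ j ≠ 0) {n m s : ℕ}
    (hms : m + s = n + 1) {B : K}
    (hpascal : qBinom q (n + 1) m = qBinom q n m + q ^ s * B)
    (hratio : qBinom q n m * (1 - q ^ m) = B * (1 - q ^ s)) :
    ccgTerm q z (n + 1) m - ccgTerm q z n m =
      q ^ (s + m ^ 2) * B * z ^ m * (qPoch q z (n + 1) / qPoch q (z ^ 2 * q ^ m) (n + 1)) -
        ccgCompanion q z n (m + 1) := by
  have hD₁ : qPoch q (z ^ 2 * q ^ m) (n + 1) =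
      qPoch q (z ^ 2 * q ^ m) (n + 2) / (1 - z ^ 2 * q ^ m * q ^ (n + 1)) := by
    rw [qPoch_succ q _ (n + 1), mul_div_cancel_right₀ _ (one_sub_sq_mul_pow_ne_zero hz _ _)]
  have hD₂ : qPoch q (z ^ 2 * q ^ (m + 1)) (n + 1) =
      qPoch q (z ^ 2 * q ^ m) (n + 2) / (1 - z ^ 2 * q ^ m) := by
    rw [qPoch_succ' q _ (n + 1), mul_div_cancel_left₀ _ (hz m), mul_assoc, ← pow_succ]
  simp only [ccgTerm, ccgCompanion]
  rw [qPoch_succ q z (n + 1), hD₁, hD₂, hpascal]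
  set P := qPoch q z (n + 1)
  set E := qPoch q (z ^ 2 * q ^ m) (n + 2)
  rw [← hms]
  simp only [div_div_eq_mul_div]
  linear_combination (P / E * z ^ m * q ^ (m ^ 2)) *
    ccg_core_identity q z B (qBinom q n m) _ m s rfl hratio

lemma ccgTerm_succ_sub_ccgTerm (hz : ∀ j : ℕ, 1 - z ^ 2 * q ^ j ≠ 0) {n k : ℕ}
    (hq : qPoch q q (n + 1) ≠ 0) (hk : k ≤ n + 1) :
    ccgTerm q z (n + 1) k - ccgTerm q z n k =
      ccgCompanion q z n k - ccgCompanion q z n (k + 1) := by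
  have hqn : qPoch q q n ≠ 0 := qPoch_ne_zero_of_le hq n.le_succ
  rcases k with _ | k
  · have h := ccgTerm_succ_sub_ccgTerm_of_qBinom hz (m := 0) (s := n + 1) (zero_add _) (B := 0)
      (by rw [qBinom_zero_right hq, qBinom_zero_right hqn, mul_zero, add_zero]) (by simp)
    simpa [ccgCompanion] using h
  · have hkn : k ≤ n := Nat.le_of_succ_le_succ hk
    have hexp : n - k + (k + 1) ^ 2 = n + 1 + k * (k + 1) := by
      zify [hkn]
      ring
    rw [ccgTerm_succ_sub_ccgTerm_of_qBinom hz (s := n - k) (by omega) (qBinom_succ_succ hq hkn)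
      (qBinom_succ_mul_one_sub hqn hkn), hexp]
    rfl

lemma ccgTerm_of_lt {n k : ℕ} (h : n < k) : ccgTerm q z n k = 0 := by
  simp [ccgTerm, qBinom_of_lt h]

lemma ccgCompanion_of_lt {n k : ℕ} (h : n < k) : ccgCompanion q z n (k + 1) = 0 := by
  simp [ccgCompanion, qBinom_of_lt h]

theorem sum_ccgTerm (hz : ∀ j : ℕ, 1 - z ^ 2 * q ^ j ≠ 0) {n : ℕ} (hq : qPoch q q n ≠ 0) :
    ∑ k ∈ range (n + 1), ccgTerm q z n k = 1 := by
  induction n with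
  | zero =>
    have h : 1 - z ^ 2 ≠ 0 := by simpa using hz 0
    rw [sum_range_one, ccgTerm, qBinom_zero_right hq]
    simp only [qPoch, zero_add, range_one, prod_singleton, pow_zero, mul_one]
    field_simp
    ring
  | succ n ih =>
    calc ∑ k ∈ range (n + 2), ccgTerm q z (n + 1) k
        = ∑ k ∈ range (n + 2), ccgTerm q z n k +
            ∑ k ∈ range (n + 2), (ccgCompanion q z n k - ccgCompanion q z n (k + 1)) := by
          rw [← sum_add_distrib]
          refine sum_congr rfl fun k hk => ?_
          rw [← ccgTerm_succ_sub_ccgTerm hz hq (mem_range_succ_iff.mp hk), add_sub_cancel]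
      _ = 1 := by
          rw [sum_range_succ, ih (qPoch_ne_zero_of_le hq n.le_succ), ccgTerm_of_lt n.lt_succ_self,
            sum_range_sub', ccgCompanion_of_lt n.lt_succ_self]
          simp [ccgCompanion]

end CCG

theorem finite_quintuple_ccg_general {K : Type*} [Field K] (q z : K) (n : ℕ)
    (hqq : qPoch q q n ≠ 0)
    (hz : ∀ j : ℕ, 1 - z ^ 2 * q ^ j ≠ 0) :
    ∑ k ∈ Finset.range (n + 1),
      (1 + z * q ^ k) * qBinom q n k *
        (qPoch q z (n + 1) / qPoch q (z ^ 2 * q ^ k) (n + 1)) *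
        z ^ k * q ^ (k ^ 2)
    = 1 :=
  sum_ccgTerm hz hqq

/-- The Chen–Chu–Gu finite form of Watson's quintuple product identity. -/
theorem finite_quintuple_ccg {K : Type*} [Field K] (q z : K) (n : ℕ)
    (hq : q ≠ 0) (hqq : qPoch q q n ≠ 0)
    (hz : ∀ j : ℕ, 1 - z ^ 2 * q ^ j ≠ 0) :
    ∑ k ∈ Finset.range (n + 1),
      (1 + z * q ^ k) * qBinom q n k *
        (qPoch q z (n + 1) / qPoch q (z ^ 2 * q ^ k) (n + 1)) *
        z ^ k * q ^ (k ^ 2)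
    = 1 :=
  finite_quintuple_ccg_general q z n hqq hz
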